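/- arXiv:1611.04403 — 4 statements merged into one kernel-verified Lean document; each statement's English description precedes it below -/
import Mathlib

section
/- Let p be a prime, let P be a finite p-group, and let G be a subgroup of Aut(P) containing the group Inn(P) of inner automorphisms of P. Then there exists a subgroup D of [P, O^p(G)] such that: (i) D is G-invariant, i.e., φ(D) = D for every φ ∈ G; (ii) every element x of D satisfies x^p = 1 if p is odd, and x^4 = 1 if p = 2; (iii) [D,P] ≤ Z(D); and (iv) every φ ∈ G with φ ≠ id whose order is coprime to p satisfies φ|_D ≠ id_D. -/
set_option linter.unusedSectionVars false

section AuxLemmas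
variable {P : Type*} [Group P]

/-- If `c = d*g*d⁻¹*g⁻¹` commutes with `d`, then `c^m = d^m * (g*(d^m)⁻¹*g⁻¹)`. -/
lemma aux_conj_pow (d g : P) (h : Commute (d*g*d⁻¹*g⁻¹) d) (m : ℕ) :
    (d*g*d⁻¹*g⁻¹)^m = d^m * (g*(d^m)⁻¹*g⁻¹) := by
  have h1 : g*d⁻¹*g⁻¹ = d⁻¹*(d*g*d⁻¹*g⁻¹) := by group
  have h2 : (g*d⁻¹*g⁻¹)^m = g*(d^m)⁻¹*g⁻¹ := by
    rw [conj_pow, inv_pow]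
  have h3 : (d⁻¹*(d*g*d⁻¹*g⁻¹))^m = (d^m)⁻¹*(d*g*d⁻¹*g⁻¹)^m := by
    rw [(h.symm.inv_left).mul_pow, inv_pow]
  rw [h1, h3] at h2
  calc (d*g*d⁻¹*g⁻¹)^m = d^m * ((d^m)⁻¹*(d*g*d⁻¹*g⁻¹)^m) := by group
  _ = d^m * (g*(d^m)⁻¹*g⁻¹) := by rw [h2]

/-- If `d^m = 1` and `⁅d,g⁆` commutes with `d`, then `⁅d,g⁆^m = 1`. -/
lemma aux_conj_pow_eq_one (d g : P) (h : Commute (d*g*d⁻¹*g⁻¹) d) {m : ℕ} (hd : d^m = 1) :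
    (d*g*d⁻¹*g⁻¹)^m = 1 := by
  rw [aux_conj_pow d g h m, hd]; group

/-- class-2 binomial: if `z` commutes with `x` and `u` and `u*x = z*(x*u)`, then
`(x*u)^k = x^k * u^k * z^(k.choose 2)`. -/
lemma aux_mul_pow (x u z : P) (hzx : Commute z x) (hzu : Commute z u)
    (hux : u*x = z*(x*u)) (k : ℕ) : (x*u)^k = x^k * u^k * z^(k.choose 2) := by
  have hk2 : ∀ n : ℕ, u * x^n = z^n * (x^n * u) := by
    intro n
    induction n with
    | zero => simp
    | succ n ih =>
      calc u * x^(n+1) = (u * x^n) * x := by rw [pow_succ]; group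
      _ = (z^n * (x^n * u)) * x := by rw [ih]
      _ = z^n * (x^n * (u * x)) := by group
      _ = z^n * (x^n * (z * (x*u))) := by rw [hux]
      _ = z^n * ((x^n * z) * (x*u)) := by group
      _ = z^n * ((z * x^n) * (x*u)) := by rw [(hzx.pow_right n).symm.eq]
      _ = z^(n+1) * (x^(n+1) * u) := by rw [pow_succ z, pow_succ x]; group
  induction k with
  | zero => simp
  | succ k ih =>
    have hch : (k+1).choose 2 = k.choose 2 + k := by
      rw [Nat.choose_succ_succ]
      simp [Nat.choose_one_right, Nat.add_comm]
    calc (x*u)^(k+1) = (x*u) * ((x*u)^k) := by rw [pow_succ']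
    _ = (x*u) * (x^k * u^k * z^(k.choose 2)) := by rw [ih]
    _ = x * ((u * x^k) * (u^k * z^(k.choose 2))) := by group
    _ = x * ((z^k * (x^k * u)) * (u^k * z^(k.choose 2))) := by rw [hk2 k]
    _ = (x * z^k) * ((x^k * u) * (u^k * z^(k.choose 2))) := by group
    _ = (z^k * x) * ((x^k * u) * (u^k * z^(k.choose 2))) := by rw [(hzx.pow_left k).eq]
    _ = z^k * ((x^(k+1) * u^(k+1)) * z^(k.choose 2)) := by
        rw [pow_succ' x, pow_succ' u]; group
    _ = (z^k * (x^(k+1) * u^(k+1))) * z^(k.choose 2) := by group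
    _ = ((x^(k+1) * u^(k+1)) * z^k) * z^(k.choose 2) := by
        rw [((hzx.pow_pow k (k+1)).mul_right (hzu.pow_pow k (k+1))).eq]
    _ = x^(k+1) * u^(k+1) * z^((k+1).choose 2) := by rw [hch, pow_add]; group

end AuxLemmas

section Tele
variable {p : ℕ} {P : Type*} [Group P] [Finite P]

set_option linter.unusedSectionVars false in
lemma aux_order_lt (hp : p.Prime) (hP : IsPGroup p P) (x : P) (hx : x^p ≠ 1) :
    orderOf (x^p) < orderOf x := by
  haveI := Fact.mk hp
  obtain ⟨k, hk⟩ := (IsPGroup.iff_orderOf.mp hP) x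
  rcases Nat.eq_zero_or_pos k with hk0 | hkpos
  · subst hk0
    simp only [pow_zero] at hk
    exact absurd (by rw [← pow_one x, ← hk, pow_orderOf_eq_one, one_pow]) hx
  · have hdvd : orderOf (x^p) ∣ p^(k-1) := by
      apply orderOf_dvd_of_pow_eq_one
      rw [← pow_mul, show p * p^(k-1) = p^k by
        rw [← pow_succ']; congr 1; omega]
      rw [← hk, pow_orderOf_eq_one]
    calc orderOf (x^p) ≤ p^(k-1) := Nat.le_of_dvd (pow_pos hp.pos _) hdvd
    _ < p^k := Nat.pow_lt_pow_right hp.one_lt (by omega)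
    _ = orderOf x := hk.symm

lemma aux_fix (hp : p.Prime) (hP : IsPGroup p P) (φ : MulAut P)
    (hco : (orderOf φ).Coprime p) (x u : P) (hu : φ u = u) (hxu : φ x = x * u) :
    φ x = x := by
  haveI : Finite (MulAut P) := Finite.of_injective (fun f => (f : P → P)) DFunLike.coe_injective
  have hk : ∀ k : ℕ, (φ^k) x = x * u^k := by
    intro k
    induction k with
    | zero => simp
    | succ k ih =>
      have h1 : (φ^(k+1)) x = (φ^k) (φ x) := by rw [pow_succ]; rfl
      have h2 : ∀ j, (φ^j) u = u := by
        intro j; induction j with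
        | zero => rfl
        | succ j ihj => rw [pow_succ']; show φ ((φ^j) u) = u; rw [ihj, hu]
      rw [h1, hxu, map_mul, ih, h2, pow_succ, mul_assoc]
  have hn : x = x * u^(orderOf φ) := by
    have := hk (orderOf φ)
    rwa [pow_orderOf_eq_one] at this
  have hun : u^(orderOf φ) = 1 := by
    have := hn.symm
    rwa [mul_eq_left] at this
  have h1 : orderOf u ∣ orderOf φ := orderOf_dvd_of_pow_eq_one hun
  obtain ⟨k, hk'⟩ := (@IsPGroup.iff_orderOf p P _ (Fact.mk hp)).mp hP u
  have h2 : (orderOf φ).Coprime (orderOf u) := by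
    rw [hk']; exact Nat.Coprime.pow_right _ hco
  have : orderOf u = 1 := Nat.eq_one_of_dvd_coprimes h2.symm (dvd_refl _) h1
  rw [orderOf_eq_one_iff.mp this, mul_one] at hxu
  exact hxu
end Tele

section ThreeSubgroups
variable {P : Type*} [Group P]

open SemidirectProduct in
/-- Three–subgroups argument in the holomorph: if `f` is trivial on `C`,
`⁅C,W⁆ ≤ C ∩ centralizer C`, and `W` is `f`-invariant, then each `w * (f w)⁻¹`
centralizes `C`. -/
lemma aux_three_subgroups (C W : Subgroup P) (f : MulAut P)
    (hfC : ∀ c ∈ C, f c = c)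
    (hCWC : ⁅C, W⁆ ≤ C) :
    ∀ w ∈ W, ∀ c ∈ C, Commute (w * (f w)⁻¹) c := by
  let S := SemidirectProduct P (MulAut P) (MonoidHom.id (MulAut P))
  let il : P →* S := SemidirectProduct.inl
  let ir : (MulAut P) →* S := SemidirectProduct.inr
  letI : Bracket S S := commutatorElement
  have haut : ∀ (g : MulAut P) (n : P), ir g * il n * (ir g)⁻¹ = il (g n) := by
    intro g n
    have h0 := SemidirectProduct.inl_aut (φ := MonoidHom.id (MulAut P)) g n
    rw [show (ir g)⁻¹ = ir g⁻¹ from (map_inv ir g).symm]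
    exact h0.symm
  have hcomm_f : ∀ c ∈ C, Commute (il c) (ir f) := by
    intro c hc
    have h0 := haut f c
    rw [hfC c hc] at h0
    have : ir f * il c = il c * ir f := by
      calc ir f * il c = (ir f * il c * (ir f)⁻¹) * ir f := (inv_mul_cancel_right _ _).symm
      _ = il c * ir f := by rw [h0]
    exact this.symm
  set Cs : Subgroup S := C.map il with hCs
  set Ws : Subgroup S := W.map il with hWs
  set Fs : Subgroup S := Subgroup.zpowers (ir f) with hFs
  have h1 : ⁅⁅Fs, Cs⁆, Ws⁆ = ⊥ := by
    have : ⁅Fs, Cs⁆ = ⊥ := by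
      rw [Subgroup.commutator_eq_bot_iff_le_centralizer]
      rw [Subgroup.zpowers_le]
      rw [Subgroup.mem_centralizer_iff]
      rintro y ⟨c, hc, rfl⟩
      exact (hcomm_f c hc).eq
    rw [this, Subgroup.commutator_bot_left]
  have h2 : ⁅⁅Cs, Ws⁆, Fs⁆ = ⊥ := by
    have hmap : ⁅Cs, Ws⁆ = Subgroup.map il ⁅C, W⁆ := (Subgroup.map_commutator C W il).symm
    rw [Subgroup.commutator_eq_bot_iff_le_centralizer, hmap]
    rintro y ⟨z, hz, rfl⟩
    rw [Subgroup.mem_centralizer_iff]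
    rintro s ⟨k, rfl⟩
    exact (((hcomm_f z (hCWC hz)).zpow_right k).eq).symm
  have h3 : ⁅⁅Ws, Fs⁆, Cs⁆ = ⊥ :=
    Subgroup.commutator_commutator_eq_bot_of_rotate h1 h2
  intro w hw c hc
  have hWF : il (w * (f w)⁻¹) ∈ ⁅Ws, Fs⁆ := by
    have hcalc : ⁅il w, ir f⁆ = il (w * (f w)⁻¹) := by
      have h0 := haut f w⁻¹
      rw [commutatorElement_def, show (il w)⁻¹ = il w⁻¹ from (map_inv il w).symm]
      calc il w * ir f * il w⁻¹ * (ir f)⁻¹ = il w * (ir f * il w⁻¹ * (ir f)⁻¹) := by simp only [mul_assoc]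
      _ = il w * il (f w⁻¹) := by rw [h0]
      _ = il (w * (f w)⁻¹) := by rw [← map_mul]; rw [map_inv]
    rw [← hcalc]
    exact Subgroup.commutator_mem_commutator (Subgroup.mem_map.mpr ⟨w, hw, rfl⟩) (Subgroup.mem_zpowers _)
  have : ⁅il (w * (f w)⁻¹), il c⁆ = 1 := by
    have := Subgroup.commutator_mem_commutator hWF (Subgroup.mem_map.mpr ⟨c, hc, rfl⟩ : il c ∈ Cs)
    rwa [h3, Subgroup.mem_bot] at this
  have hcs : Commute (il (w * (f w)⁻¹)) (il c) :=
    commutatorElement_eq_one_iff_commute.mp this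
  have : il ((w * (f w)⁻¹) * c) = il (c * (w * (f w)⁻¹)) := by
    rw [map_mul, map_mul]; exact hcs.eq
  exact SemidirectProduct.inl_injective this

end ThreeSubgroups

/-- `O^p(T)` for a subgroup `T` of `M`: the subgroup generated by all elements
of `T` of order coprime to `p`; for finite groups this is the smallest normal
subgroup of `T` with `p`-group quotient. -/
def pResidualOf (p : ℕ) {M : Type*} [Group M] (T : Subgroup M) : Subgroup M :=
  Subgroup.closure {x : M | x ∈ T ∧ (orderOf x).Coprime p}

/-- `[Q, T]` for `Q` a subgroup of `P` and `T` a subgroup of `Aut(P)`: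
the subgroup of `P` generated by all elements `x⁻¹ * φ x` with `x ∈ Q`, `φ ∈ T`. -/
def autCommutator {P : Type*} [Group P] (Q : Subgroup P) (T : Subgroup (MulAut P)) :
    Subgroup P :=
  Subgroup.closure {y : P | ∃ x ∈ Q, ∃ φ ∈ T, y = x⁻¹ * φ x}

open scoped Pointwise in
set_option maxHeartbeats 1000000 in
theorem exists_small_exponent_subgroup_detecting_coprime_automorphisms
    (p : ℕ) (hp : p.Prime)
    (P : Type*) [Group P] [Finite P] (hP : IsPGroup p P)
    (G : Subgroup (MulAut P)) (hInn : (MulAut.conj : P →* MulAut P).range ≤ G) :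
    ∃ D : Subgroup P,
      D ≤ autCommutator ⊤ (pResidualOf p G) ∧
      (∀ φ : MulAut P, φ ∈ G → Subgroup.map φ.toMonoidHom D = D) ∧
      (Odd p → ∀ x ∈ D, x ^ p = 1) ∧
      (p = 2 → ∀ x ∈ D, x ^ 4 = 1) ∧
      ⁅D, (⊤ : Subgroup P)⁆ ≤ Subgroup.centralizer (D : Set P) ⊓ D ∧
      (∀ φ : MulAut P, φ ∈ G → φ ≠ 1 → (orderOf φ).Coprime p →
        ∃ x ∈ D, φ x ≠ x) := by
  classical
  haveI hfact := Fact.mk hp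
  set K : Subgroup (MulAut P) := pResidualOf p G with hK
  set W : Subgroup P := autCommutator ⊤ K with hWdef
  -- basic closure facts
  have hφK : ∀ φ : MulAut P, φ ∈ G → (orderOf φ).Coprime p → φ ∈ K :=
    fun φ h1 h2 => Subgroup.subset_closure ⟨h1, h2⟩
  have hKconj : ∀ φ ∈ G, ∀ ψ ∈ K, φ * ψ * φ⁻¹ ∈ K := by
    intro φ hφ ψ hψ
    have hmap : Subgroup.map (MulAut.conj φ).toMonoidHom K ≤ K := by
      rw [hK]
      show Subgroup.map _ (Subgroup.closure _) ≤ _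
      rw [MonoidHom.map_closure]
      rw [Subgroup.closure_le]
      rintro y ⟨t, ⟨htG, htco⟩, rfl⟩
      apply Subgroup.subset_closure
      constructor
      · show (MulAut.conj φ) t ∈ G
        rw [MulAut.conj_apply]
        exact mul_mem (mul_mem hφ htG) (inv_mem hφ)
      · rwa [orderOf_injective (MulAut.conj φ).toMonoidHom
          (MulEquiv.injective _) t]
    have : (MulAut.conj φ) ψ ∈ K := hmap ⟨ψ, hψ, rfl⟩
    rwa [MulAut.conj_apply] at this
  have hWpt : ∀ φ ∈ G, ∀ w ∈ W, φ w ∈ W := by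
    intro φ hφ w hw
    have hmap : Subgroup.map φ.toMonoidHom W ≤ W := by
      rw [hWdef]
      show Subgroup.map _ (Subgroup.closure _) ≤ _
      rw [MonoidHom.map_closure]
      rw [Subgroup.closure_le]
      rintro y ⟨s, ⟨x, -, ψ, hψ, rfl⟩, rfl⟩
      apply Subgroup.subset_closure
      refine ⟨φ x, trivial, φ*ψ*φ⁻¹, hKconj φ hφ ψ hψ, ?_⟩
      show φ.toMonoidHom (x⁻¹ * ψ x) = (φ x)⁻¹ * (φ*ψ*φ⁻¹) (φ x)
      simp [MulAut.inv_def]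
    exact hmap ⟨w, hw, rfl⟩
  have hgen : ∀ (φ : MulAut P), φ ∈ K → ∀ x : P, x⁻¹ * φ x ∈ W :=
    fun φ h x => Subgroup.subset_closure ⟨x, trivial, φ, h, rfl⟩
  have hmap_of_pt : ∀ T : Subgroup P, (∀ φ ∈ G, ∀ x ∈ T, φ x ∈ T) →
      (∀ φ ∈ G, Subgroup.map φ.toMonoidHom T = T) := by
    intro T h φ hφ
    ext y
    constructor
    · rintro ⟨x, hx, rfl⟩; exact h φ hφ x hx
    · intro hy
      exact ⟨φ⁻¹ y, h φ⁻¹ (inv_mem hφ) y hy, by simp [MulAut.inv_def]⟩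
  -- the family and the maximal element
  set F : Set (Subgroup P) := {C | C ≤ W ∧ (∀ φ ∈ G, ∀ x ∈ C, φ x ∈ C) ∧
    ⁅C, (⊤ : Subgroup P)⁆ ≤ Subgroup.centralizer (C : Set P) ⊓ C} with hF
  have hbot : (⊥ : Subgroup P) ∈ F := by
    refine ⟨bot_le, ?_, ?_⟩
    · intro φ _ x hx
      rw [Subgroup.mem_bot] at hx ⊢
      rw [hx, map_one]
    · rw [Subgroup.commutator_bot_left]; exact bot_le
  obtain ⟨C, hCF, hCmax⟩ := Set.Finite.exists_maximalFor id F (Set.toFinite F) ⟨⊥, hbot⟩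
  obtain ⟨hCW, hCpt, hCcomm⟩ := hCF
  set Zc : Subgroup P := Subgroup.centralizer (C : Set P) ⊓ C with hZc
  have hZC : Zc ≤ C := inf_le_right
  have hZcen : Zc ≤ Subgroup.centralizer (C : Set P) := inf_le_left
  have hcommZC : ∀ z ∈ Zc, ∀ c ∈ C, Commute z c := by
    intro z hz c hc
    exact ((Subgroup.mem_centralizer_iff.mp (hZcen hz)) c hc : Commute c z).symm
  have hcenpt : ∀ φ ∈ G, ∀ v : P, v ∈ Subgroup.centralizer (C : Set P) →
      φ v ∈ Subgroup.centralizer (C : Set P) := by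
    intro φ hφ v hv
    rw [Subgroup.mem_centralizer_iff]
    intro c hc
    have hc' : φ⁻¹ c ∈ C := hCpt φ⁻¹ (inv_mem hφ) c hc
    have h1 : (φ⁻¹ c) * v = v * (φ⁻¹ c) := (Subgroup.mem_centralizer_iff.mp hv) _ hc'
    calc c * φ v = φ (φ⁻¹ c) * φ v := by simp [MulAut.inv_def]
    _ = φ ((φ⁻¹ c) * v) := by rw [map_mul]
    _ = φ (v * (φ⁻¹ c)) := by rw [h1]
    _ = φ v * c := by rw [map_mul]; simp [MulAut.inv_def]
  have hZpt : ∀ φ ∈ G, ∀ z ∈ Zc, φ z ∈ Zc := by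
    intro φ hφ z hz
    exact ⟨hcenpt φ hφ z (hZcen hz), hCpt φ hφ z (hZC hz)⟩
  have hconjpt : ∀ (T : Subgroup P), (∀ φ ∈ G, ∀ x ∈ T, φ x ∈ T) →
      ∀ (g : P), ∀ x ∈ T, g * x * g⁻¹ ∈ T := by
    intro T h g x hx
    have := h (MulAut.conj g) (hInn ⟨g, rfl⟩) x hx
    rwa [MulAut.conj_apply] at this
  -- maximality: the centralizer of C in W is contained in C
  have hVC : Subgroup.centralizer (C : Set P) ⊓ W ≤ C := by
    by_contra hnot
    set V : Subgroup P := Subgroup.centralizer (C : Set P) ⊓ W with hVdef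
    have hVpt : ∀ φ ∈ G, ∀ v ∈ V, φ v ∈ V :=
      fun φ hφ v hv => ⟨hcenpt φ hφ v hv.1, hWpt φ hφ v hv.2⟩
    have hVn := hconjpt V hVpt
    have hZn := hconjpt Zc hZpt
    have hVcomZ : ∀ v ∈ V, ∀ z ∈ Zc, v * z = z * v := by
      intro v hv z hz
      exact ((Subgroup.mem_centralizer_iff.mp hv.1) z (hZC hz)).symm
    set Z2 : Subgroup V := Zc.subgroupOf V with hZ2
    let sm : P → (V ⧸ Z2) → (V ⧸ Z2) := fun g =>
      Quotient.map' (fun v => (⟨g * ↑v * g⁻¹, hVn g ↑v v.2⟩ : V))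
        (by
          intro a b hab
          rw [QuotientGroup.leftRel_apply] at hab ⊢
          rw [Subgroup.mem_subgroupOf] at hab ⊢
          show (g * (a:P) * g⁻¹)⁻¹ * (g * (b:P) * g⁻¹) ∈ Zc
          have heq : (g * (a:P) * g⁻¹)⁻¹ * (g * (b:P) * g⁻¹)
              = g * ((a : P)⁻¹ * (b : P)) * g⁻¹ := by group
          rw [heq]
          exact hZn g _ hab)
    letI actInst : MulAction P (V ⧸ Z2) :=
      { smul := sm
        one_smul := by
          intro q
          refine Quotient.inductionOn' q (fun v => ?_)
          show Quotient.map' _ _ (Quotient.mk'' v) = Quotient.mk'' v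
          rw [Quotient.map'_mk'']
          exact congrArg _ (Subtype.ext (show (1:P) * ↑v * (1:P)⁻¹ = ↑v by group))
        mul_smul := by
          intro g h q
          refine Quotient.inductionOn' q (fun v => ?_)
          show Quotient.map' _ _ (Quotient.mk'' v) =
            Quotient.map' _ _ (Quotient.map' _ _ (Quotient.mk'' v))
          rw [Quotient.map'_mk'', Quotient.map'_mk'', Quotient.map'_mk'']
          exact congrArg _ (Subtype.ext
            (show (g*h) * ↑v * (g*h)⁻¹ = g * (h * ↑v * h⁻¹) * g⁻¹ by group)) }
    have hsm : ∀ (g : P) (v : V), g • (Quotient.mk'' v : V ⧸ Z2) =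
        Quotient.mk'' (⟨g * ↑v * g⁻¹, hVn g ↑v v.2⟩ : V) := by
      intro g v
      show Quotient.map' _ _ (Quotient.mk'' v) = _
      rw [Quotient.map'_mk'']
    have hfix1 : (Quotient.mk'' (1 : V) : V ⧸ Z2) ∈ MulAction.fixedPoints P (V ⧸ Z2) := by
      intro g
      rw [hsm]
      exact congrArg _ (Subtype.ext (show g * ((1:V):P) * g⁻¹ = ((1:V):P) by
        rw [show ((1:V):P) = (1:P) from rfl]; group))
    have hdvd : p ∣ Nat.card (V ⧸ Z2) := by
      obtain ⟨n, hn⟩ := IsPGroup.iff_card.mp (hP.to_subgroup V)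
      have hdvd1 : Nat.card (V ⧸ Z2) ∣ p^n :=
        ⟨Nat.card Z2, by rw [← hn, Subgroup.card_eq_card_quotient_mul_card_subgroup Z2]⟩
      obtain ⟨i, hi, hcard⟩ := (Nat.dvd_prime_pow hp).mp hdvd1
      rcases Nat.eq_zero_or_pos i with hi0 | hipos
      · exfalso
        rw [hi0, pow_zero] at hcard
        have hsub : Subsingleton (V ⧸ Z2) := (Nat.card_eq_one_iff_unique.mp hcard).1
        apply hnot
        intro v hv
        have hq : (Quotient.mk'' (⟨v, hv⟩ : V) : V ⧸ Z2) = Quotient.mk'' (1 : V) :=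
          hsub.elim _ _
        have h2 := Quotient.exact' hq
        rw [QuotientGroup.leftRel_apply, Subgroup.mem_subgroupOf] at h2
        simp only [mul_one, InvMemClass.coe_inv] at h2
        exact hZC (inv_mem_iff.mp h2)
      · calc p = p^1 := (pow_one p).symm
        _ ∣ p^i := pow_dvd_pow p hipos
        _ ∣ Nat.card (V ⧸ Z2) := hcard ▸ dvd_refl _
    obtain ⟨q, hqfix, hqne⟩ :=
      hP.exists_fixed_point_of_prime_dvd_card_of_fixed_point (V ⧸ Z2) hdvd hfix1
    obtain ⟨v, rfl⟩ := Quotient.mk''_surjective q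
    have hvZ : (v : P) ∉ Zc := by
      intro h
      apply hqne
      refine Quotient.sound' ?_
      rw [QuotientGroup.leftRel_apply, Subgroup.mem_subgroupOf]
      show ((1:P))⁻¹ * (v:P) ∈ Zc
      rw [inv_one, one_mul]
      exact h
    have hvH : ∀ g : P, g * (v : P) * g⁻¹ * (v : P)⁻¹ ∈ Zc := by
      intro g
      have h1 := hqfix g
      rw [hsm] at h1
      have h2pre := Quotient.exact' h1
      rw [QuotientGroup.leftRel_apply, Subgroup.mem_subgroupOf] at h2pre
      have h2 : (g * (v:P) * g⁻¹)⁻¹ * (v:P) ∈ Zc := h2pre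
      have h4 : g * (v:P) * g⁻¹ * (v:P)⁻¹
          = (v:P) * ((g * ↑v * g⁻¹)⁻¹ * ↑v)⁻¹ * (v:P)⁻¹ := by group
      rw [h4, hVcomZ (v:P) v.2 _ (inv_mem h2), mul_assoc, mul_inv_cancel, mul_one]
      exact inv_mem h2
    -- the subgroup H of elements of V whose P-conjugates stay in the same Zc-coset
    set Hs : Subgroup P :=
      { carrier := {x : P | x ∈ V ∧ ∀ g : P, g * x * g⁻¹ * x⁻¹ ∈ Zc}
        one_mem' := ⟨one_mem V, fun g => by
          rw [show g * 1 * g⁻¹ * 1⁻¹ = 1 by group]; exact one_mem Zc⟩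
        mul_mem' := by
          rintro a b ⟨haV, ha⟩ ⟨hbV, hb⟩
          refine ⟨mul_mem haV hbV, fun g => ?_⟩
          have h1 : g*(a*b)*g⁻¹*(a*b)⁻¹ = (g*a*g⁻¹*a⁻¹) * (a * (g*b*g⁻¹*b⁻¹) * a⁻¹) := by
            group
          have h2 : a * (g*b*g⁻¹*b⁻¹) * a⁻¹ = g*b*g⁻¹*b⁻¹ := by
            rw [hVcomZ a haV _ (hb g)]; group
          rw [h1, h2]
          exact mul_mem (ha g) (hb g)
        inv_mem' := by
          rintro a ⟨haV, ha⟩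
          refine ⟨inv_mem haV, fun g => ?_⟩
          have h1 : g*a⁻¹*g⁻¹*(a⁻¹)⁻¹ = a⁻¹ * (g*a*g⁻¹*a⁻¹)⁻¹ * a := by group
          have h2 : a⁻¹ * (g*a*g⁻¹*a⁻¹)⁻¹ * a = (g*a*g⁻¹*a⁻¹)⁻¹ := by
            rw [hVcomZ a⁻¹ (inv_mem haV) _ (inv_mem (ha g))]; group
          rw [h1, h2]
          exact inv_mem (ha g) } with hHs
    have hHpt : ∀ φ ∈ G, ∀ x ∈ Hs, φ x ∈ Hs := by
      intro φ hφ x hx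
      refine ⟨hVpt φ hφ x hx.1, fun g => ?_⟩
      have h0 := hZpt φ hφ _ (hx.2 (φ⁻¹ g))
      rw [map_mul, map_mul, map_mul, map_inv, map_inv] at h0
      rw [show φ (φ⁻¹ g) = g by simp [MulAut.inv_def]] at h0
      exact h0
    haveI hCnorm : C.Normal := ⟨fun c hc g => hconjpt C hCpt g c hc⟩
    have hsupF : C ⊔ Hs ∈ F := by
      refine ⟨sup_le hCW (fun x hx => (hx.1.2 : x ∈ W)), ?_, ?_⟩
      · intro φ hφ x hx
        have hmapC := hmap_of_pt C hCpt φ hφ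
        have hmapH := hmap_of_pt Hs hHpt φ hφ
        have hmap : Subgroup.map φ.toMonoidHom (C ⊔ Hs) = C ⊔ Hs := by
          rw [Subgroup.map_sup, hmapC, hmapH]
        rw [← hmap]
        exact ⟨x, hx, rfl⟩
      · have hZsup : Zc ≤ Subgroup.centralizer ((C ⊔ Hs : Subgroup P) : Set P) := by
          intro z hz
          rw [Subgroup.mem_centralizer_iff]
          intro y hy
          have hy' : y ∈ (C : Set P) * (Hs : Set P) := by
            rw [← Subgroup.normal_mul]; exact hy
          obtain ⟨c, hc, h, hh, rfl⟩ := hy'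
          have h1 : c * z = z * c := (hcommZC z hz c hc).symm.eq
          have h2 : h * z = z * h := hVcomZ h hh.1 z hz
          calc c * h * z = c * (z * h) := by rw [mul_assoc, h2]
          _ = z * (c * h) := by rw [← mul_assoc, h1, mul_assoc]
        rw [Subgroup.commutator_le]
        rintro y hy g -
        have hy' : y ∈ (C : Set P) * (Hs : Set P) := by
          rw [← Subgroup.normal_mul]; exact hy
        obtain ⟨c, hc, h, hh, rfl⟩ := hy'
        have hA : h*g*h⁻¹*g⁻¹ ∈ Zc := by
          have h0 := hh.2 g
          rw [show h*g*h⁻¹*g⁻¹ = (g*h*g⁻¹*h⁻¹)⁻¹ by group]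
          exact inv_mem h0
        have hB := hCcomm (Subgroup.commutator_mem_commutator hc (Subgroup.mem_top g))
        rw [commutatorElement_def] at hB
        letI : Bracket P P := commutatorElement
        have hz' : ⁅c*h, g⁆ ∈ Zc := by
          rw [commutatorElement_def]
          have h1 : c*h*g*(c*h)⁻¹*g⁻¹ = (c * (h*g*h⁻¹*g⁻¹) * c⁻¹) * (c*g*c⁻¹*g⁻¹) := by
            group
          have h2 : c * (h*g*h⁻¹*g⁻¹) * c⁻¹ = h*g*h⁻¹*g⁻¹ := by
            rw [(hcommZC _ hA c hc).symm.eq]; group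
          rw [h1, h2]
          exact mul_mem hA hB
        exact Subgroup.mem_inf.mpr ⟨hZsup hz', (le_sup_left : C ≤ C ⊔ Hs) (hZC hz')⟩
    have heq : C = C ⊔ Hs := le_antisymm le_sup_left (hCmax hsupF le_sup_left)
    have hvC : (v : P) ∈ C := by
      rw [show C = C ⊔ Hs from heq]
      exact (le_sup_right : Hs ≤ C ⊔ Hs) ⟨v.2, hvH⟩
    exact hvZ ⟨v.2.1, hvC⟩
  -- order decreases under p-th power
  have hordlt : ∀ x : P, x^p ≠ 1 → orderOf (x^p) < orderOf x :=
    fun x hx => aux_order_lt hp hP x hx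
  -- Step 1: a coprime automorphism fixing all elements of order p of Z(C) fixes Z(C)
  have step1 : ∀ a : MulAut P, a ∈ G → (orderOf a).Coprime p →
      (∀ z ∈ Zc, z^p = 1 → a z = z) → ∀ z ∈ Zc, a z = z := by
    intro a haG hco hΩ
    have key : ∀ n : ℕ, ∀ z ∈ Zc, orderOf z ≤ n → a z = z := by
      intro n
      induction n with
      | zero =>
        intro z hz hn
        have := orderOf_pos z
        omega
      | succ n ih =>
        intro z hz hn
        by_cases hzp : z^p = 1
        · exact hΩ z hz hzp
        · have hfixp : a (z^p) = z^p := ih (z^p) (pow_mem hz p)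
            (by have := hordlt z hzp; omega)
          have huZ : z⁻¹ * a z ∈ Zc := mul_mem (inv_mem hz) (hZpt a haG z hz)
          have hcz : Commute z (z⁻¹ * a z) := (hcommZC _ huZ z (hZC hz)).symm
          have hzu : a z = z * (z⁻¹ * a z) := by group
          have hup : (z⁻¹ * a z)^p = 1 := by
            have h1 : z^p = z^p * (z⁻¹ * a z)^p := by
              calc z^p = a (z^p) := hfixp.symm
              _ = (a z)^p := by rw [map_pow]
              _ = (z * (z⁻¹ * a z))^p := by rw [← hzu]
              _ = z^p * (z⁻¹ * a z)^p := hcz.mul_pow p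
            exact (left_eq_mul.mp h1)
          exact aux_fix hp hP a hco z _ (hΩ _ huZ hup) hzu
    intro z hz
    exact key (orderOf z) z hz le_rfl
  -- detection: a coprime automorphism of G fixing C pointwise is trivial
  have detect : ∀ φ : MulAut P, φ ∈ G → (orderOf φ).Coprime p →
      (∀ x ∈ C, φ x = x) → φ = 1 := by
    intro φ hφ hco hCfix
    have hCWC : ⁅C, W⁆ ≤ C :=
      le_trans (Subgroup.commutator_mono le_rfl le_top) (le_trans hCcomm hZC)
    have h3 := aux_three_subgroups C W φ hCfix hCWC
    have hWfix : ∀ w ∈ W, φ w = w := by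
      intro w hw
      have hdcen : w * (φ w)⁻¹ ∈ Subgroup.centralizer (C : Set P) :=
        Subgroup.mem_centralizer_iff.mpr (fun c hc => ((h3 w hw c hc).symm.eq))
      have hdW : w * (φ w)⁻¹ ∈ W := mul_mem hw (inv_mem (hWpt φ hφ w hw))
      have hdZ : w * (φ w)⁻¹ ∈ Zc := ⟨hdcen, hVC ⟨hdcen, hdW⟩⟩
      have hdfix : φ (w * (φ w)⁻¹) = w * (φ w)⁻¹ := hCfix _ (hZC hdZ)
      have hφw : φ w = (w * (φ w)⁻¹)⁻¹ * w := by group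
      have hxu : φ w = w * (w⁻¹ * (w * (φ w)⁻¹)⁻¹ * w) := by group
      have hufix : φ (w⁻¹ * (w * (φ w)⁻¹)⁻¹ * w) = w⁻¹ * (w * (φ w)⁻¹)⁻¹ * w := by
        rw [map_mul, map_mul, map_inv, map_inv, hdfix, hφw]
        group
      exact aux_fix hp hP φ hco w _ hufix hxu
    have hall : ∀ x : P, φ x = x := by
      intro x
      have hdW : x⁻¹ * φ x ∈ W := hgen φ (hφK φ hφ hco) x
      exact aux_fix hp hP φ hco x _ (hWfix _ hdW) (by group)
    exact MulEquiv.ext fun x => (hall x).trans rfl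
  -- now split according to the parity of p
  rcases hp.eq_two_or_odd' with h2 | hodd
  · -- the case p = 2
    subst h2
    set D : Subgroup P :=
      { carrier := {x : P | x ∈ C ∧ x^2 ∈ Zc ∧ x^(4:ℕ) = 1}
        one_mem' := ⟨one_mem C, by rw [one_pow]; exact one_mem Zc, by rw [one_pow]⟩
        mul_mem' := by
          rintro a b ⟨haC, ha2, ha4⟩ ⟨hbC, hb2, hb4⟩
          have hc := hCcomm (Subgroup.commutator_mem_commutator hbC (Subgroup.mem_top a))
          rw [commutatorElement_def] at hc
          have hca : Commute (b*a*b⁻¹*a⁻¹) a := hcommZC _ hc a haC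
          have hcb : Commute (b*a*b⁻¹*a⁻¹) b := hcommZC _ hc b hbC
          have hsq : (a*b)^2 = a^2 * b^2 * (b*a*b⁻¹*a⁻¹) := by
            have h0 := aux_mul_pow a b (b*a*b⁻¹*a⁻¹) hca hcb (by group) 2
            rwa [show Nat.choose 2 2 = 1 from rfl, pow_one] at h0
          have hc2 : (b*a*b⁻¹*a⁻¹)^2 = 1 := by
            rw [aux_conj_pow b a hcb 2, ← ((hcommZC _ hb2 a haC).inv_left).eq]
            group
          refine ⟨mul_mem haC hbC, ?_, ?_⟩
          · rw [hsq]
            exact mul_mem (mul_mem ha2 hb2) hc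
          · have hzz : ∀ y ∈ Zc, ∀ w ∈ Zc, Commute y w :=
              fun y hy w hw => hcommZC y hy w (hZC hw)
            have c1 : Commute (a^2 * b^2) (b*a*b⁻¹*a⁻¹) :=
              (Commute.mul_left (hzz _ ha2 _ hc) (hzz _ hb2 _ hc))
            have c2 : Commute (a^2) (b^2) := hzz _ ha2 _ hb2
            rw [show (4:ℕ) = 2*2 from rfl, pow_mul, hsq, c1.mul_pow, c2.mul_pow,
              show ((a:P)^2)^2 = a^(4:ℕ) by rw [← pow_mul],
              show ((b:P)^2)^2 = b^(4:ℕ) by rw [← pow_mul],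
              ha4, hb4, hc2, one_mul, one_mul]
        inv_mem' := by
          rintro a ⟨haC, ha2, ha4⟩
          refine ⟨inv_mem haC, ?_, ?_⟩
          · rw [inv_pow]; exact inv_mem ha2
          · rw [inv_pow, ha4, inv_one] } with hD
    have hDC : ∀ x, x ∈ D → x ∈ C := fun x hx => hx.1
    have hDmem : ∀ x, x ∈ C → x^2 ∈ Zc → x^(4:ℕ) = 1 → x ∈ D :=
      fun x h1 h2 h3 => ⟨h1, h2, h3⟩
    have hDpt : ∀ φ ∈ G, ∀ x ∈ D, φ x ∈ D := by
      intro φ hφ x hx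
      refine hDmem _ (hCpt φ hφ x (hDC x hx)) ?_ ?_
      · rw [← map_pow]
        exact hZpt φ hφ _ hx.2.1
      · rw [← map_pow, hx.2.2, map_one]
    have step2 : ∀ a : MulAut P, a ∈ G → (orderOf a).Coprime 2 → (∀ x ∈ D, a x = x) →
        ∀ x ∈ C, a x = x := by
      intro a haG hco hDfix
      have hZfix := step1 a haG hco (fun z hz h1 => hDfix z (hDmem z (hZC hz)
        (by rw [h1]; exact one_mem Zc)
        (by rw [show (4:ℕ) = 2*2 from rfl, pow_mul, h1, one_pow])))
      have key : ∀ n : ℕ, ∀ x ∈ C, orderOf x ≤ n → a x = x := by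
        intro n
        induction n with
        | zero =>
          intro x hx hn
          have := orderOf_pos x
          omega
        | succ n ih =>
          intro x hx hn
          by_cases hx2 : x^2 = 1
          · exact hDfix x (hDmem x hx (by rw [hx2]; exact one_mem Zc)
              (by rw [show (4:ℕ) = 2*2 from rfl, pow_mul, hx2, one_pow]))
          · have hfixp : a (x^2) = x^2 := ih (x^2) (pow_mem hx 2)
              (by have := hordlt x hx2; omega)
            have huC : x⁻¹ * a x ∈ C := mul_mem (inv_mem hx) (hCpt a haG x hx)
            set u := x⁻¹ * a x with hu
            have hcZ := hCcomm (Subgroup.commutator_mem_commutator huC (Subgroup.mem_top x))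
            rw [commutatorElement_def] at hcZ
            set c := u*x*u⁻¹*x⁻¹ with hc
            have hcx : Commute c x := hcommZC _ hcZ x hx
            have hcu : Commute c u := hcommZC _ hcZ u huC
            have hxu : a x = x * u := by rw [hu]; group
            have heq : x^2 = x^2 * (u^2 * c) := by
              calc x^2 = a (x^2) := hfixp.symm
              _ = (a x)^2 := by rw [map_pow]
              _ = (x*u)^2 := by rw [hxu]
              _ = x^2 * u^2 * c^(Nat.choose 2 2) := aux_mul_pow x u c hcx hcu (by rw [hc]; group) 2
              _ = x^2 * (u^2 * c) := by rw [show Nat.choose 2 2 = 1 from rfl, pow_one, mul_assoc]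
            have h1 : u^2 * c = 1 := (left_eq_mul.mp heq)
            have hu2 : u^2 = c⁻¹ := eq_inv_of_mul_eq_one_left h1
            have hu2Z : u^2 ∈ Zc := by rw [hu2]; exact inv_mem hcZ
            have hc2 : c^2 = 1 := by
              rw [hc, aux_conj_pow u x hcu 2]
              rw [← ((hcommZC _ hu2Z x hx).inv_left).eq]
              group
            have hu4 : u^(4:ℕ) = 1 := by
              rw [show (4:ℕ) = 2*2 from rfl, pow_mul, hu2, inv_pow, hc2, inv_one]
            have hufix : a u = u := hDfix u (hDmem u huC hu2Z hu4)
            exact aux_fix hp hP a hco x u hufix hxu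
      intro x hx
      exact key (orderOf x) x hx le_rfl
    refine ⟨D, ?_, ?_, ?_, ?_, ?_, ?_⟩
    · exact fun x hx => hCW (hDC x hx)
    · exact fun φ hφ => hmap_of_pt D hDpt φ hφ
    · intro hodd
      exact absurd hodd (by decide)
    · exact fun _ x hx => hx.2.2
    · rw [Subgroup.commutator_le]
      rintro d hd g -
      rw [commutatorElement_def]
      have hzZ := hCcomm (Subgroup.commutator_mem_commutator (hDC d hd) (Subgroup.mem_top g))
      rw [commutatorElement_def] at hzZ
      have hcd : Commute (d*g*d⁻¹*g⁻¹) d := hcommZC _ hzZ d (hDC d hd)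
      refine Subgroup.mem_inf.mpr ⟨?_, hDmem _ (hZC hzZ) ?_ ?_⟩
      · exact Subgroup.centralizer_le (fun y hy => hDC y hy) (hZcen hzZ)
      · rw [aux_conj_pow d g hcd 2]
        exact mul_mem hd.2.1 (hconjpt Zc hZpt g _ (inv_mem hd.2.1))
      · exact aux_conj_pow_eq_one d g hcd (hd.2.2)
    · intro φ hφ hne hco
      by_contra hcon
      push_neg at hcon
      apply hne
      exact detect φ hφ hco (step2 φ hφ hco (fun x hx => hcon x hx))
  · -- the case p odd
    obtain ⟨m, hm⟩ := hodd
    have hchoose : p.choose 2 = p * m := by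
      rw [Nat.choose_two_right, hm, show 2*m+1-1 = 2*m by omega,
        show (2*m+1)*(2*m) = ((2*m+1)*m)*2 by ring]
      exact Nat.mul_div_cancel _ (by norm_num)
    set D : Subgroup P :=
      { carrier := {x : P | x ∈ C ∧ x^p = 1}
        one_mem' := ⟨one_mem C, one_pow p⟩
        mul_mem' := by
          rintro a b ⟨haC, hap⟩ ⟨hbC, hbp⟩
          refine ⟨mul_mem haC hbC, ?_⟩
          have hc := hCcomm (Subgroup.commutator_mem_commutator hbC (Subgroup.mem_top a))
          rw [commutatorElement_def] at hc
          have hca : Commute (b*a*b⁻¹*a⁻¹) a := hcommZC _ hc a haC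
          have hcb : Commute (b*a*b⁻¹*a⁻¹) b := hcommZC _ hc b hbC
          have hcp : (b*a*b⁻¹*a⁻¹)^p = 1 := aux_conj_pow_eq_one b a hcb hbp
          rw [aux_mul_pow a b (b*a*b⁻¹*a⁻¹) hca hcb (by group) p, hap, hbp,
            hchoose, pow_mul, hcp, one_pow, one_mul, one_mul]
        inv_mem' := by
          rintro a ⟨haC, hap⟩
          exact ⟨inv_mem haC, by rw [inv_pow, hap, inv_one]⟩ } with hD
    have hDC : ∀ x, x ∈ D → x ∈ C := fun x hx => hx.1
    have hDpow : ∀ x, x ∈ D → x^p = 1 := fun x hx => hx.2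
    have hDmem : ∀ x, x ∈ C → x^p = 1 → x ∈ D := fun x h1 h2 => ⟨h1, h2⟩
    have hDpt : ∀ φ ∈ G, ∀ x ∈ D, φ x ∈ D := by
      intro φ hφ x hx
      exact hDmem _ (hCpt φ hφ x (hDC x hx)) (by rw [← map_pow, hDpow x hx, map_one])
    -- Step 2 for odd p
    have step2 : ∀ a : MulAut P, a ∈ G → (orderOf a).Coprime p → (∀ x ∈ D, a x = x) →
        ∀ x ∈ C, a x = x := by
      intro a haG hco hDfix
      have hZfix := step1 a haG hco (fun z hz h1 => hDfix z (hDmem z (hZC hz) h1))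
      have key : ∀ n : ℕ, ∀ x ∈ C, orderOf x ≤ n → a x = x := by
        intro n
        induction n with
        | zero =>
          intro x hx hn
          have := orderOf_pos x
          omega
        | succ n ih =>
          intro x hx hn
          by_cases hxp : x^p = 1
          · exact hDfix x (hDmem x hx hxp)
          · have hfixp : a (x^p) = x^p := ih (x^p) (pow_mem hx p)
              (by have := hordlt x hxp; omega)
            have huC : x⁻¹ * a x ∈ C := mul_mem (inv_mem hx) (hCpt a haG x hx)
            set u := x⁻¹ * a x with hu
            have hcZ := hCcomm (Subgroup.commutator_mem_commutator huC (Subgroup.mem_top x))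
            rw [commutatorElement_def] at hcZ
            set c := u*x*u⁻¹*x⁻¹ with hc
            have hcx : Commute c x := hcommZC _ hcZ x hx
            have hcu : Commute c u := hcommZC _ hcZ u huC
            have hxu : a x = x * u := by rw [hu]; group
            have heq : x^p = x^p * (u^p * c^(p.choose 2)) := by
              calc x^p = a (x^p) := hfixp.symm
              _ = (a x)^p := by rw [map_pow]
              _ = (x*u)^p := by rw [hxu]
              _ = x^p * u^p * c^(p.choose 2) := aux_mul_pow x u c hcx hcu (by rw [hc]; group) p
              _ = x^p * (u^p * c^(p.choose 2)) := by rw [mul_assoc]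
            have h1 : u^p * c^(p.choose 2) = 1 := (left_eq_mul.mp heq)
            have hwp : (u * c^m)^p = 1 := by
              rw [(hcu.symm.pow_right m).mul_pow, ← pow_mul, show m * p = p.choose 2 by
                rw [hchoose]; ring]
              exact h1
            have hwD : a (u * c^m) = u * c^m :=
              hDfix _ (hDmem _ (mul_mem huC (hZC (pow_mem hcZ m))) hwp)
            have hcfix : a c = c := hZfix c hcZ
            have hufix : a u = u := by
              have h2 : a u * c^m = u * c^m := by
                calc a u * c^m = a u * (a c)^m := by rw [hcfix]
                _ = a (u * c^m) := by rw [map_mul a u (c^m), map_pow a c m]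
                _ = u * c^m := hwD
              exact mul_right_cancel h2
            exact aux_fix hp hP a hco x u hufix hxu
      intro x hx
      exact key (orderOf x) x hx le_rfl
    refine ⟨D, ?_, ?_, ?_, ?_, ?_, ?_⟩
    · exact fun x hx => hCW (hDC x hx)
    · exact fun φ hφ => hmap_of_pt D hDpt φ hφ
    · exact fun _ x hx => hDpow x hx
    · intro h2
      omega
    · rw [Subgroup.commutator_le]
      rintro d hd g -
      rw [commutatorElement_def]
      have hzZ := hCcomm (Subgroup.commutator_mem_commutator (hDC d hd) (Subgroup.mem_top g))
      rw [commutatorElement_def] at hzZ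
      have hcd : Commute (d*g*d⁻¹*g⁻¹) d := hcommZC _ hzZ d (hDC d hd)
      refine Subgroup.mem_inf.mpr ⟨?_, hDmem _ (hZC hzZ)
        (aux_conj_pow_eq_one d g hcd (hDpow d hd))⟩
      exact Subgroup.centralizer_le (fun y hy => hDC y hy) (hZcen hzZ)
    · intro φ hφ hne hco
      by_contra hcon
      push_neg at hcon
      apply hne
      exact detect φ hφ hco (step2 φ hφ hco (fun x hx => hcon x hx) )
end

section
/- Let p be a prime, let P be a finite p-group, and let G be a subgroup of Aut(P) containing Inn(P). Let D be a subgroup of P such that φ(D) = D for every φ ∈ G, [D,P] ≤ Z(D), and every φ ∈ G with φ ≠ id whose order is coprime to p satisfies φ|_D ≠ id_D. Let A be a subgroup of D that is maximal with respect to inclusion among the abelian subgroups of D. Then A is a normal subgroup of P, and the pointwise stabilizer C_G(A) = {φ ∈ G : φ(a) = a for all a ∈ A} is a p-group. -/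
private lemma aux_closure_comm {Q : Type*} [Group Q] {S : Set Q}
    (h : ∀ x ∈ S, ∀ y ∈ S, x * y = y * x) {a b : Q}
    (ha : a ∈ Subgroup.closure S) (hb : b ∈ Subgroup.closure S) : a * b = b * a := by
  have h1 : a ∈ Subgroup.centralizer S := by
    refine (Subgroup.closure_le _).mpr ?_ ha
    intro x hx
    exact Subgroup.mem_centralizer_iff.mpr fun y hy => h y hy x hx
  have h2 : b ∈ Subgroup.centralizer {a} := by
    refine (Subgroup.closure_le _).mpr ?_ hb
    intro x hx
    refine Subgroup.mem_centralizer_iff.mpr ?_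
    rintro y rfl
    exact (Subgroup.mem_centralizer_iff.mp h1 x hx).symm
  exact Subgroup.mem_centralizer_iff.mp h2 a rfl

open scoped commutatorElement

theorem maximal_abelian_subgroup_normal_and_centralizer_is_p_group
    (p : ℕ) (hp : p.Prime)
    (P : Type*) [Group P] [Finite P] (hP : IsPGroup p P)
    (G : Subgroup (MulAut P)) (hInn : (MulAut.conj : P →* MulAut P).range ≤ G)
    (D : Subgroup P)
    (hDinv : ∀ φ : MulAut P, φ ∈ G → Subgroup.map φ.toMonoidHom D = D)
    (hDZ : ⁅D, (⊤ : Subgroup P)⁆ ≤ Subgroup.centralizer (D : Set P) ⊓ D)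
    (hfaith : ∀ φ : MulAut P, φ ∈ G → φ ≠ 1 → (orderOf φ).Coprime p →
      ∃ x ∈ D, φ x ≠ x)
    (A : Subgroup P) (hAD : A ≤ D)
    (hAab : ∀ a ∈ A, ∀ b ∈ A, a * b = b * a)
    (hAmax : ∀ A' : Subgroup P, A' ≤ D → (∀ a ∈ A', ∀ b ∈ A', a * b = b * a) →
      A ≤ A' → A' = A) :
    A.Normal ∧ IsPGroup p (G ⊓ fixingSubgroup (MulAut P) (A : Set P) : Subgroup (MulAut P)) := by
  -- A contains every element of D centralizing A
  have hmem : ∀ y ∈ D, (∀ a ∈ A, y * a = a * y) → y ∈ A := by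
    intro y hy hc
    have hS : ∀ x ∈ (↑A ∪ {y} : Set P), ∀ z ∈ (↑A ∪ {y} : Set P), x * z = z * x := by
      rintro x (hx | hx) z (hz | hz)
      · exact hAab x hx z hz
      · rw [Set.mem_singleton_iff] at hz; subst hz; exact (hc x hx).symm
      · rw [Set.mem_singleton_iff] at hx; subst hx; exact hc z hz
      · rw [Set.mem_singleton_iff] at hx hz; subst hx; subst hz; rfl
    set A' := Subgroup.closure (↑A ∪ {y} : Set P) with hA'
    have h1 : A' ≤ D := by
      refine (Subgroup.closure_le _).mpr (Set.union_subset (fun t ht => hAD ht) ?_)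
      simpa using hy
    have h2 : A ≤ A' := by
      rw [← Subgroup.closure_eq A]
      exact Subgroup.closure_mono Set.subset_union_left
    have h3 := hAmax A' h1 (fun a ha b hb => aux_closure_comm hS ha hb) h2
    rw [← h3]
    exact Subgroup.subset_closure (Set.mem_union_right _ rfl)
  -- Z(D) ∩ D ≤ A
  have hZA : ∀ z ∈ Subgroup.centralizer (D : Set P) ⊓ D, z ∈ A := by
    intro z hz
    exact hmem z hz.2 fun a ha => (Subgroup.mem_centralizer_iff.mp hz.1 a (hAD ha)).symm
  -- the key fixing lemma
  have hfixD : ∀ ψ : MulAut P, ψ ∈ G → (∀ a ∈ A, ψ a = a) → (orderOf ψ).Coprime p →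
      ∀ x ∈ D, ψ x = x := by
    intro ψ hψG hψA hcop x hx
    have hux : ψ x ∈ D := by
      rw [← hDinv ψ hψG]
      exact Subgroup.mem_map.mpr ⟨x, hx, rfl⟩
    set v := x⁻¹ * ψ x with hv
    have hvD : v ∈ D := D.mul_mem (D.inv_mem hx) hux
    have hvA : v ∈ A := by
      refine hmem v hvD ?_
      intro a ha
      have hca : ⁅x, a⁆ ∈ A :=
        hZA _ (hDZ (Subgroup.commutator_mem_commutator hx (Subgroup.mem_top a)))
      have h1 : ψ ⁅x, a⁆ = ⁅x, a⁆ := hψA _ hca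
      have h2 : ψ ⁅x, a⁆ = ⁅ψ x, a⁆ := by
        simp [commutatorElement_def, map_mul, map_inv, hψA a ha]
      have h : ψ x * a * (ψ x)⁻¹ * a⁻¹ = x * a * x⁻¹ * a⁻¹ := by
        rw [← commutatorElement_def, ← commutatorElement_def, ← h2, h1]
      have h3 : ψ x * a * (ψ x)⁻¹ = x * a * x⁻¹ := mul_right_cancel h
      have h4 : ψ x * a = x * a * x⁻¹ * ψ x := by rw [← h3]; group
      calc v * a = x⁻¹ * (ψ x * a) := by rw [hv]; group
        _ = x⁻¹ * (x * a * x⁻¹ * ψ x) := by rw [h4]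
        _ = a * v := by rw [hv]; group
    have hiter : ∀ j : ℕ, (ψ ^ j) x = x * v ^ j := by
      intro j
      induction j with
      | zero => simp
      | succ j ih =>
        have e1 : ψ ^ (j + 1) = ψ * ψ ^ j := (pow_succ' ψ j)
        rw [e1, MulAut.mul_apply, ih, map_mul, map_pow, hψA v hvA]
        have e2 : ψ x = x * v := by rw [hv]; group
        rw [e2, pow_succ' v j]
        group
    have hq := hiter (orderOf ψ)
    rw [pow_orderOf_eq_one] at hq
    have hv1 : v ^ orderOf ψ = 1 := by
      have : x = x * v ^ orderOf ψ := by simpa using hq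
      exact (left_eq_mul.mp this)
    obtain ⟨l, hl⟩ := hP v
    have dvd1 : orderOf v ∣ p ^ l := orderOf_dvd_of_pow_eq_one hl
    have dvd2 : orderOf v ∣ orderOf ψ := orderOf_dvd_of_pow_eq_one hv1
    have hco : Nat.Coprime (orderOf ψ) (p ^ l) := hcop.pow_right l
    have : orderOf v ∣ 1 := hco ▸ Nat.dvd_gcd dvd2 dvd1
    have hv0 : v = 1 := orderOf_eq_one_iff.mp (Nat.dvd_one.mp this)
    have : x⁻¹ * ψ x = 1 := by rw [← hv, hv0]
    exact (inv_mul_eq_one.mp this).symm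
  constructor
  · -- A is normal
    refine ⟨fun a ha g => ?_⟩
    have hcom : ⁅g, a⁆ ∈ Subgroup.centralizer (D : Set P) ⊓ D := by
      refine hDZ ?_
      rw [Subgroup.commutator_comm]
      exact Subgroup.commutator_mem_commutator (Subgroup.mem_top g) (hAD ha)
    have hz := hZA _ hcom
    have he : g * a * g⁻¹ = ⁅g, a⁆ * a := by group
    rw [he]
    exact A.mul_mem hz ha
  · -- p-group part
    intro g
    have hGmem : (g : MulAut P) ∈ G := g.prop.1
    have hFmem : (g : MulAut P) ∈ fixingSubgroup (MulAut P) (A : Set P) := g.prop.2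
    set n := orderOf (g : MulAut P) with hn
    have hn0 : n ≠ 0 := (orderOf_pos _).ne'
    refine ⟨n.factorization p, ?_⟩
    set k := n.factorization p with hk
    set ψ := (g : MulAut P) ^ (p ^ k) with hψ
    have hψG : ψ ∈ G := pow_mem hGmem _
    have hψF : ψ ∈ fixingSubgroup (MulAut P) (A : Set P) := pow_mem hFmem _
    have hψA : ∀ a ∈ A, ψ a = a := by
      intro a ha
      have := (mem_fixingSubgroup_iff (MulAut P)).mp hψF a ha
      simpa [MulAut.smul_def] using this
    have hψ1 : ψ = 1 := by
      by_contra hne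
      have hord : orderOf ψ = ordCompl[p] n := by
        rw [hψ, orderOf_pow, ← hn, Nat.gcd_eq_right (Nat.ordProj_dvd n p)]
      have hcop : (orderOf ψ).Coprime p := by
        rw [hord]
        exact (Nat.coprime_ordCompl hp hn0).symm
      obtain ⟨x, hxD, hxne⟩ := hfaith ψ hψG hne hcop
      exact hxne (hfixD ψ hψG hψA hcop x hxD)
    refine Subtype.ext ?_
    push_cast
    rw [← hψ] at *
    simpa using hψ1
end

section
/- Let p be a prime, let P be a finite p-group, and let G be a subgroup of Aut(P) containing Inn(P). Let D₁ be a characteristic subgroup of P (i.e., φ(D₁) = D₁ for every φ ∈ Aut(P)) such that [D₁,P] ≤ Z(D₁) and such that every automorphism φ of P with φ ≠ id whose order is coprime to p satisfies φ|_{D₁} ≠ id. Set D = [D₁, O^p(G)], the subgroup of P generated by all elements x⁻¹ φ(x) with x ∈ D₁ and φ ∈ O^p(G). Then: (i) D ≤ D₁ and D ≤ [P, O^p(G)]; (ii) ψ(D) = D for every ψ ∈ G; (iii) [D,P] ≤ Z(D); and (iv) every ψ ∈ G with ψ ≠ id whose order is coprime to p satisfies ψ|_D ≠ id_D. -/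
/-- The `p`-residual is normal: conjugation by elements of `G` preserves it. -/
lemma pResidualOf_conj_mem (p : ℕ) {M : Type*} [Group M] (G : Subgroup M)
    {ψ : M} (hψ : ψ ∈ G) {φ : M} (hφ : φ ∈ pResidualOf p G) :
    ψ * φ * ψ⁻¹ ∈ pResidualOf p G := by
  induction hφ using Subgroup.closure_induction with
  | mem x hx =>
    refine Subgroup.subset_closure ?_
    refine ⟨mul_mem (mul_mem hψ hx.1) (inv_mem hψ), ?_⟩
    have : ψ * x * ψ⁻¹ = (MulAut.conj ψ) x := by simp [MulAut.conj_apply]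
    rw [this, (MulAut.conj ψ).orderOf_eq]
    exact hx.2
  | one => simpa using one_mem _
  | mul x y hx hy ihx ihy =>
    have : ψ * (x * y) * ψ⁻¹ = (ψ * x * ψ⁻¹) * (ψ * y * ψ⁻¹) := by group
    rw [this]; exact mul_mem ihx ihy
  | inv x hx ihx =>
    have : ψ * x⁻¹ * ψ⁻¹ = (ψ * x * ψ⁻¹)⁻¹ := by group
    rw [this]; exact inv_mem ihx

theorem commutator_with_p_residual_detects_coprime_automorphisms
    (p : ℕ) (hp : p.Prime)
    (P : Type*) [Group P] [Finite P] (hP : IsPGroup p P)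
    (G : Subgroup (MulAut P)) (hInn : (MulAut.conj : P →* MulAut P).range ≤ G)
    (D₁ : Subgroup P)
    (hchar : ∀ φ : MulAut P, Subgroup.map φ.toMonoidHom D₁ = D₁)
    (hD₁Z : ⁅D₁, (⊤ : Subgroup P)⁆ ≤ Subgroup.centralizer (D₁ : Set P) ⊓ D₁)
    (hfaith : ∀ φ : MulAut P, φ ≠ 1 → (orderOf φ).Coprime p →
      ∃ x ∈ D₁, φ x ≠ x)
    (D : Subgroup P) (hD : D = autCommutator D₁ (pResidualOf p G)) :
    D ≤ D₁ ∧
    D ≤ autCommutator ⊤ (pResidualOf p G) ∧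
    (∀ ψ : MulAut P, ψ ∈ G → Subgroup.map ψ.toMonoidHom D = D) ∧
    ⁅D, (⊤ : Subgroup P)⁆ ≤ Subgroup.centralizer (D : Set P) ⊓ D ∧
    (∀ ψ : MulAut P, ψ ∈ G → ψ ≠ 1 → (orderOf ψ).Coprime p →
      ∃ x ∈ D, ψ x ≠ x) := by
  -- membership of D₁ is preserved by automorphisms
  have hD₁mem : ∀ (φ : MulAut P) {x : P}, x ∈ D₁ → φ x ∈ D₁ := by
    intro φ x hx
    have := Subgroup.mem_map_of_mem φ.toMonoidHom hx
    rwa [hchar φ] at this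
  -- (i) D ≤ D₁
  have h1 : D ≤ D₁ := by
    rw [hD, autCommutator]
    refine (Subgroup.closure_le _).mpr ?_
    rintro y ⟨x, hx, φ, -, rfl⟩
    exact mul_mem (inv_mem hx) (hD₁mem φ hx)
  -- (i') D ≤ [P, O^p(G)]
  have h2 : D ≤ autCommutator ⊤ (pResidualOf p G) := by
    rw [hD, autCommutator, autCommutator]
    refine Subgroup.closure_mono ?_
    rintro y ⟨x, hx, φ, hφ, rfl⟩
    exact ⟨x, trivial, φ, hφ, rfl⟩
  -- (ii) G-invariance
  have hmap_le : ∀ ψ : MulAut P, ψ ∈ G → Subgroup.map ψ.toMonoidHom D ≤ D := by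
    intro ψ hψ
    rw [hD, autCommutator, MonoidHom.map_closure]
    refine (Subgroup.closure_le _).mpr ?_
    rintro y ⟨z, ⟨x, hx, φ, hφ, rfl⟩, rfl⟩
    refine Subgroup.subset_closure ?_
    refine ⟨ψ x, hD₁mem ψ hx, ψ * φ * ψ⁻¹, pResidualOf_conj_mem p G hψ hφ, ?_⟩
    simp [map_mul]
  have h3 : ∀ ψ : MulAut P, ψ ∈ G → Subgroup.map ψ.toMonoidHom D = D := by
    intro ψ hψ
    refine le_antisymm (hmap_le ψ hψ) ?_
    intro x hx
    have hx' : ψ⁻¹ x ∈ D := hmap_le ψ⁻¹ (inv_mem hψ) ⟨x, hx, rfl⟩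
    exact ⟨ψ⁻¹ x, hx', by simp⟩
  -- D is closed under conjugation
  have hDnormal : ∀ g : P, ∀ x ∈ D, g * x * g⁻¹ ∈ D := by
    intro g x hx
    have hg : MulAut.conj g ∈ G := hInn ⟨g, rfl⟩
    have := (h3 _ hg).ge
    have hx' : (MulAut.conj g) x ∈ Subgroup.map (MulAut.conj g).toMonoidHom D :=
      Subgroup.mem_map_of_mem _ hx
    rw [h3 _ hg] at hx'
    simpa [MulAut.conj_apply] using hx'
  -- (iii)
  have h4 : ⁅D, (⊤ : Subgroup P)⁆ ≤ Subgroup.centralizer (D : Set P) ⊓ D := by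
    refine le_inf ?_ ?_
    · calc ⁅D, (⊤ : Subgroup P)⁆ ≤ ⁅D₁, (⊤ : Subgroup P)⁆ :=
            Subgroup.commutator_mono h1 le_rfl
        _ ≤ Subgroup.centralizer (D₁ : Set P) ⊓ D₁ := hD₁Z
        _ ≤ Subgroup.centralizer (D : Set P) :=
            inf_le_left.trans (Subgroup.centralizer_le h1)
    · refine Subgroup.commutator_le.mpr ?_
      intro g hg h _
      have : g * h * g⁻¹ * h⁻¹ = g * (h * g⁻¹ * h⁻¹) := by group
      rw [commutatorElement_def, this]
      exact mul_mem hg (hDnormal h _ (inv_mem hg))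
  -- (iv)
  refine ⟨h1, h2, h3, h4, ?_⟩
  intro ψ hψG hψne hcop
  by_contra hcon
  push_neg at hcon
  have hψR : ψ ∈ pResidualOf p G := Subgroup.subset_closure ⟨hψG, hcop⟩
  -- ψ fixes every element of D₁
  have hfix : ∀ x ∈ D₁, ψ x = x := by
    intro x hx
    set c : P := x⁻¹ * ψ x with hc
    have hcD : c ∈ D := by
      rw [hD, autCommutator]
      exact Subgroup.subset_closure ⟨x, hx, ψ, hψR, rfl⟩
    have hψc : ψ c = c := hcon c hcD
    have hpow : ∀ k : ℕ, (ψ ^ k) x = x * c ^ k := by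
      intro k
      induction k with
      | zero => simp
      | succ k ih =>
        have : ψ ^ (k + 1) = ψ * ψ ^ k := by rw [pow_succ']
        rw [this]
        have : (ψ * ψ ^ k) x = ψ ((ψ ^ k) x) := rfl
        rw [this, ih, map_mul, map_pow, hψc]
        have hψx : ψ x = x * c := by rw [hc]; group
        rw [hψx, mul_assoc, ← pow_succ']
    have hn : c ^ orderOf ψ = 1 := by
      have := hpow (orderOf ψ)
      rw [pow_orderOf_eq_one ψ] at this
      have : x = x * c ^ orderOf ψ := this
      exact (mul_eq_left.mp this.symm)
    have hdvd : orderOf c ∣ orderOf ψ := orderOf_dvd_of_pow_eq_one hn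
    obtain ⟨k, hk⟩ := hP c
    have hdvd2 : orderOf c ∣ p ^ k := orderOf_dvd_of_pow_eq_one hk
    have hcopk : (orderOf ψ).Coprime (p ^ k) := hcop.pow_right k
    have : orderOf c = 1 :=
      Nat.eq_one_of_dvd_coprimes hcopk.symm hdvd2 hdvd
    have hc1 : c = 1 := orderOf_eq_one_iff.mp this
    have : ψ x = x * 1 := by rw [← hc1, hc]; group
    simpa using this
  obtain ⟨x, hx, hne⟩ := hfaith ψ hψne hcop
  exact hne (hfix x hx)
end

section
/- For every prime p and every integer n ≥ 2 with p not dividing n, there exist a finite group G, a Sylow p-subgroup S of G that is normal in G, and a subgroup H of G with S ≤ H, such that: (i) the index of H in G is coprime to p; (ii) S ≤ O^p(G); (iii) Hom_H(A,B) = Hom_G(A,B) for all subgroups A, B of S that are cyclic of order p or cyclic of order 4; and yet (iv) Hom_H(S,S) ≠ Hom_G(S,S), so H does not control fusion in G. -/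
/-- `conjHomsIn H A B` is the set `Hom_H(A,B)` of group homomorphisms `A → B`
induced by conjugation by an element of `H`. Taking `H = ⊤` gives `Hom_G(A,B)`. -/
def conjHomsIn {G : Type*} [Group G] (H A B : Subgroup G) : Set (A →* B) :=
  {φ | ∃ g ∈ H, ∀ a : A, (φ a : G) = g * (a : G) * g⁻¹}

/-- `pResidual p G` is `O^p(G)`, the subgroup generated by all elements of
order coprime to `p`; for finite `G` this is the smallest normal subgroup with
`p`-group quotient. -/
def pResidual (p : ℕ) (G : Type*) [Group G] : Subgroup G :=
  Subgroup.closure {x : G | (orderOf x).Coprime p}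

/-- The configuration of the paper's example: a finite group `G` with a normal
Sylow `p`-subgroup `S` contained in `O^p(G)`, and a subgroup `H ≥ S` of index
coprime to `p` which controls fusion on the cyclic subgroups of `S` of order
`p` or `4`, but does not control fusion in `G`. -/
def IsFusionCounterexample (p : ℕ) (G : Type) [Group G] [Finite G] : Prop :=
  ∃ S H : Subgroup G,
    IsPGroup p S ∧ ¬ p ∣ S.index ∧ S.Normal ∧ S ≤ H ∧
    (H.index).Coprime p ∧
    S ≤ pResidual p G ∧
    (∀ A B : Subgroup G, A ≤ S → B ≤ S →
      IsCyclic A → (Nat.card A = p ∨ Nat.card A = 4) →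
      IsCyclic B → (Nat.card B = p ∨ Nat.card B = 4) →
      conjHomsIn H A B = conjHomsIn ⊤ A B) ∧
    conjHomsIn H S S ≠ conjHomsIn ⊤ S S

open SemidirectProduct


noncomputable def zmodHom {M : Type*} [Group M] (n : ℕ) (hn : n ≠ 0) (x : M) (hx : x ^ n = 1) :
    Multiplicative (ZMod n) →* M := by
  haveI : NeZero n := ⟨hn⟩
  refine MonoidHom.mk' (fun c => x ^ (c.toAdd).val) ?_
  intro a b
  have key : ∀ k : ℕ, x ^ (k % n) = x ^ k := by
    intro k
    conv_rhs => rw [← Nat.mod_add_div k n]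
    rw [pow_add, pow_mul, hx, one_pow, mul_one]
  show x ^ (a.toAdd + b.toAdd).val = _
  rw [ZMod.val_add, key, pow_add]

lemma zmodHom_apply {M : Type*} [Group M] (n : ℕ) (hn : n ≠ 0) (x : M) (hx : x ^ n = 1)
    (c : ZMod n) : zmodHom n hn x hx (Multiplicative.ofAdd c) = x ^ c.val := rfl

def addAutToMulAut (α : Type*) [AddGroup α] : Multiplicative (AddAut α) →* MulAut (Multiplicative α) where
  toFun e := AddEquiv.toMultiplicative e.toAdd
  map_one' := by ext; rfl
  map_mul' e₁ e₂ := by ext; rfl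

def unitsAut (M : Type*) [Monoid M] : MulAut M →* MulAut Mˣ where
  toFun e := Units.mapEquiv e
  map_one' := by ext; rfl
  map_mul' e₁ e₂ := by ext; rfl

def sdpEquivProd {N G : Type*} [Group N] [Group G] {φ : G →* MulAut N} :
    (N ⋊[φ] G) ≃ N × G where
  toFun x := (x.left, x.right)
  invFun q := ⟨q.1, q.2⟩
  left_inv _ := rfl
  right_inv _ := rfl

instance {N G : Type*} [Group N] [Group G] {φ : G →* MulAut N} [Finite N] [Finite G] :
    Finite (N ⋊[φ] G) := Finite.of_equiv _ sdpEquivProd.symm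

lemma sdp_card {N G : Type*} [Group N] [Group G] {φ : G →* MulAut N} :
    Nat.card (N ⋊[φ] G) = Nat.card N * Nat.card G := by
  rw [Nat.card_congr (sdpEquivProd (φ := φ)), Nat.card_prod]

section
variable (p n : ℕ) [Fact p.Prime] (hn : n ≠ 0)

noncomputable instance : Fintype (GaloisField p n) := Fintype.ofFinite _

noncomputable def Frob : RingAut (GaloisField p n) := frobeniusEquiv (GaloisField p n) p

lemma Frob_apply (x : GaloisField p n) : Frob p n x = x ^ p := rfl

lemma Frob_pow_apply (m : ℕ) : ∀ x : GaloisField p n, (Frob p n ^ m) x = x ^ p ^ m := by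
  induction m with
  | zero => intro x; rw [pow_zero, pow_zero, pow_one]; rfl
  | succ k ih =>
    intro x
    rw [pow_succ]
    have : (Frob p n ^ k * Frob p n) x = (Frob p n ^ k) (Frob p n x) := rfl
    rw [this, Frob_apply, ih, ← pow_mul, ← pow_succ']

lemma Frob_pow_n (hn' : n ≠ 0) : Frob p n ^ n = 1 := by
  ext x
  show (Frob p n ^ n) x = x
  rw [Frob_pow_apply p n n x]
  have hcard : Fintype.card (GaloisField p n) = p ^ n := by
    rw [← Nat.card_eq_fintype_card, GaloisField.card p n hn']
  rw [← hcard, FiniteField.pow_card]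

noncomputable def chi : Multiplicative (ZMod n) →* RingAut (GaloisField p n) :=
  zmodHom n hn (Frob p n) (Frob_pow_n p n hn)

noncomputable def psi : Multiplicative (ZMod n) →* MulAut (GaloisField p n)ˣ :=
  ((unitsAut _).comp (RingAut.toMulAut (R := GaloisField p n))).comp (chi p n hn)

abbrev Msd := (GaloisField p n)ˣ ⋊[psi p n hn] Multiplicative (ZMod n)

noncomputable def fOne : (GaloisField p n)ˣ →* MulAut (Multiplicative (GaloisField p n)) :=
  (addAutToMulAut _).comp (DistribMulAction.toAddAut (GaloisField p n)ˣ (GaloisField p n))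

noncomputable def fTwo : Multiplicative (ZMod n) →* MulAut (Multiplicative (GaloisField p n)) :=
  ((addAutToMulAut _).comp (RingAut.toAddAut (R := GaloisField p n))).comp (chi p n hn)

lemma fOne_apply (u : (GaloisField p n)ˣ) (x : GaloisField p n) :
    fOne p n u (Multiplicative.ofAdd x) = Multiplicative.ofAdd ((u : GaloisField p n) * x) := rfl

lemma fTwo_apply (c : Multiplicative (ZMod n)) (x : GaloisField p n) :
    fTwo p n hn c (Multiplicative.ofAdd x) = Multiplicative.ofAdd (chi p n hn c x) := rfl

lemma compat : ∀ c : Multiplicative (ZMod n),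
    (fOne p n).comp ((psi p n hn c).toMonoidHom) =
      (MulAut.conj (fTwo p n hn c)).toMonoidHom.comp (fOne p n) := by
  intro c
  ext u a
  show fOne p n (psi p n hn c u) a = (fTwo p n hn c * fOne p n u * (fTwo p n hn c)⁻¹) a
  have h1 : (fTwo p n hn c)⁻¹ = fTwo p n hn c⁻¹ := (map_inv (fTwo p n hn) c).symm
  rw [h1]
  have ha : a = Multiplicative.ofAdd a.toAdd := rfl
  rw [ha]
  show fOne p n (psi p n hn c u) (Multiplicative.ofAdd a.toAdd)
      = fTwo p n hn c (fOne p n u (fTwo p n hn c⁻¹ (Multiplicative.ofAdd a.toAdd)))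
  rw [fOne_apply, fTwo_apply, fOne_apply, fTwo_apply]
  have hpsi : ((psi p n hn c u : (GaloisField p n)ˣ) : GaloisField p n)
      = chi p n hn c (u : GaloisField p n) := rfl
  rw [hpsi]
  rw [map_inv]
  congr 1
  rw [map_mul]
  congr 1
  exact ((chi p n hn c).apply_symm_apply _).symm

noncomputable def phiG : Msd p n hn →* MulAut (Multiplicative (GaloisField p n)) :=
  SemidirectProduct.lift (fOne p n) (fTwo p n hn) (compat p n hn)

abbrev Gsd := Multiplicative (GaloisField p n) ⋊[phiG p n hn] Msd p n hn

lemma phiG_apply (m : Msd p n hn) (x : GaloisField p n) :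
    phiG p n hn m (Multiplicative.ofAdd x)
      = Multiplicative.ofAdd ((m.left : GaloisField p n) * chi p n hn m.right x) := rfl

end

section
variable (p n : ℕ) [Fact p.Prime] (hn : n ≠ 0)

noncomputable def Ssub : Subgroup (Gsd p n hn) := (inl (φ := phiG p n hn)).range

noncomputable def Hsub : Subgroup (Gsd p n hn) :=
  Subgroup.comap (rightHom (φ := phiG p n hn)) (inl (φ := psi p n hn)).range

lemma conj_inl (g : Gsd p n hn) (x : Multiplicative (GaloisField p n)) :
    g * inl x * g⁻¹ = inl (phiG p n hn g.right x) := by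
  ext <;> simp [mul_comm]

lemma phiG_inl_apply (u : (GaloisField p n)ˣ) (x : GaloisField p n) :
    phiG p n hn (inl u) (Multiplicative.ofAdd x)
      = Multiplicative.ofAdd ((u : GaloisField p n) * x) := by
  rw [phiG, lift_inl, fOne_apply]

lemma phiG_inr_apply (c : Multiplicative (ZMod n)) (x : GaloisField p n) :
    phiG p n hn (inr c) (Multiplicative.ofAdd x)
      = Multiplicative.ofAdd (chi p n hn c x) := by
  rw [phiG, lift_inr, fTwo_apply]

lemma card_Ssub : Nat.card (Ssub p n hn) = p ^ n := by
  rw [Ssub, Nat.card_congr (MonoidHom.ofInjective (inl_injective (φ := phiG p n hn))).toEquiv.symm]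
  rw [Nat.card_congr ⟨Multiplicative.toAdd, Multiplicative.ofAdd, fun _ => rfl, fun _ => rfl⟩]
  exact GaloisField.card p n hn

lemma card_Msd : Nat.card (Msd p n hn) = (p ^ n - 1) * n := by
  rw [sdp_card, Nat.card_units, GaloisField.card p n hn]
  congr 1
  rw [Nat.card_congr ⟨Multiplicative.toAdd, Multiplicative.ofAdd, fun _ => rfl, fun _ => rfl⟩]
  exact Nat.card_zmod n

lemma Ssub_eq_ker : Ssub p n hn = (rightHom (φ := phiG p n hn)).ker :=
  range_inl_eq_ker_rightHom

lemma index_Ssub : (Ssub p n hn).index = (p ^ n - 1) * n := by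
  rw [Ssub_eq_ker, Subgroup.index_ker, MonoidHom.range_eq_top.2 rightHom_surjective,
    Subgroup.card_top, card_Msd]

lemma Ssub_normal : (Ssub p n hn).Normal := by
  rw [Ssub_eq_ker]; exact MonoidHom.normal_ker _

lemma Ssub_le_Hsub : Ssub p n hn ≤ Hsub p n hn := by
  intro x hx
  rw [Ssub_eq_ker] at hx
  simp only [Hsub, Subgroup.mem_comap, MonoidHom.mem_ker.1 hx]
  exact one_mem _

lemma index_Hsub : (Hsub p n hn).index = n := by
  rw [Hsub, Subgroup.index_comap_of_surjective _ rightHom_surjective,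
    range_inl_eq_ker_rightHom, Subgroup.index_ker,
    MonoidHom.range_eq_top.2 rightHom_surjective, Subgroup.card_top,
    Nat.card_congr ⟨Multiplicative.toAdd, Multiplicative.ofAdd, fun _ => rfl, fun _ => rfl⟩]
  exact Nat.card_zmod n

end

section
variable (p n : ℕ) [Fact p.Prime] (hn : n ≠ 0)

lemma card_gf (hn : n ≠ 0) : Fintype.card (GaloisField p n) = p ^ n := by
  rw [← Nat.card_eq_fintype_card, GaloisField.card p n hn]

lemma exists_ne_zero_ne_one (hn2 : 2 ≤ n) : ∃ x : GaloisField p n, x ≠ 0 ∧ x ≠ 1 := by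
  classical
  by_contra h
  push_neg at h
  have hinj : Function.Injective (fun x : GaloisField p n => decide (x = 0)) := by
    intro x y hxy
    simp only [decide_eq_decide] at hxy
    rcases eq_or_ne x 0 with h0 | h0
    · rw [h0, (hxy.1 h0 ▸ rfl : y = 0)]
    · rw [h x h0, h y (fun hy0 => h0 (hxy.2 hy0))]
  have hcard := Fintype.card_le_of_injective _ hinj
  rw [card_gf p n (by omega), Fintype.card_bool] at hcard
  have hp2 : 2 ≤ p := (Fact.out : p.Prime).two_le
  have : 2 ^ 2 ≤ p ^ n := (Nat.pow_le_pow_left hp2 2).trans (Nat.pow_le_pow_right (by omega) hn2)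
  omega

lemma not_p_dvd_sub_one (hn : n ≠ 0) : ¬ p ∣ p ^ n - 1 := by
  intro hdvd
  have h1 : p ∣ p ^ n := dvd_pow_self p hn
  have hple : 1 ≤ p ^ n := Nat.one_le_pow _ _ (Fact.out : p.Prime).pos
  have h2 := Nat.dvd_sub h1 hdvd
  rw [Nat.sub_sub_self hple] at h2
  exact (Fact.out : p.Prime).one_lt.ne' (Nat.dvd_one.mp h2)

lemma Ssub_le_pResidual (hn2 : 2 ≤ n) : Ssub p n hn ≤ pResidual p (Gsd p n hn) := by
  obtain ⟨x0, hx0, hx1⟩ := exists_ne_zero_ne_one p n hn2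
  set d : (GaloisField p n)ˣ := Units.mk0 x0 hx0 with hd
  set e : Gsd p n hn := inr (inl d) with he
  have hcop : (orderOf e).Coprime p := by
    have h1 : orderOf e = orderOf d := by
      rw [he]
      have : (inr (inl d) : Gsd p n hn)
          = ((inr (φ := phiG p n hn)).comp (inl (φ := psi p n hn))) d := rfl
      have hinj : Function.Injective ((inr (φ := phiG p n hn)).comp (inl (φ := psi p n hn))) :=
        fun x y hxy => inl_injective (inr_injective hxy)
      rw [this, orderOf_injective _ hinj]
    rw [h1]
    refine Nat.Coprime.symm (((Fact.out : p.Prime).coprime_iff_not_dvd).2 ?_)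
    intro hdvd
    refine not_p_dvd_sub_one p n hn (hdvd.trans ?_)
    have := orderOf_dvd_natCard d
    rwa [Nat.card_units, GaloisField.card p n hn] at this
  have hmem_e : e ∈ pResidual p (Gsd p n hn) := Subgroup.subset_closure hcop
  intro g hg
  obtain ⟨b, rfl⟩ := hg
  set a : GaloisField p n := b.toAdd with hab
  set s : Multiplicative (GaloisField p n) := Multiplicative.ofAdd ((1 - x0)⁻¹ * a) with hs
  have hy : (inl s : Gsd p n hn) * e * (inl s)⁻¹ ∈ pResidual p (Gsd p n hn) := by
    apply Subgroup.subset_closure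
    show (orderOf _).Coprime p
    have h2 : (inl s : Gsd p n hn) * e * (inl s)⁻¹ = (MulAut.conj (inl s : Gsd p n hn)) e := rfl
    rw [h2, (MulAut.conj (inl s : Gsd p n hn)).orderOf_eq]
    exact hcop
  have hmem : (inl s : Gsd p n hn) * e * (inl s)⁻¹ * e⁻¹ ∈ pResidual p (Gsd p n hn) :=
    mul_mem hy (inv_mem hmem_e)
  have hkey : (inl s : Gsd p n hn) * e * (inl s)⁻¹ * e⁻¹ = inl b := by
    have h3 : e * (inl s)⁻¹ * e⁻¹ = inl (phiG p n hn e.right s⁻¹) := by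
      rw [← map_inv inl s, ← conj_inl]
    have h4 : (inl s : Gsd p n hn) * e * (inl s)⁻¹ * e⁻¹
        = inl s * (e * (inl s)⁻¹ * e⁻¹) := by group
    rw [h4, h3, ← map_mul]
    congr 1
    have h5 : e.right = inl d := rfl
    have h6 : s⁻¹ = Multiplicative.ofAdd (-((1 - x0)⁻¹ * a)) := rfl
    rw [h5, h6, phiG_inl_apply]
    have h7 : (d : GaloisField p n) = x0 := rfl
    rw [h7]
    have h8 : s * Multiplicative.ofAdd (x0 * -((1 - x0)⁻¹ * a))
        = Multiplicative.ofAdd ((1 - x0)⁻¹ * a + x0 * -((1 - x0)⁻¹ * a)) := rfl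
    rw [h8]
    have h9 : (1 - x0)⁻¹ * a + x0 * -((1 - x0)⁻¹ * a) = (1 - x0) * ((1 - x0)⁻¹ * a) := by ring
    rw [h9, ← mul_assoc, mul_inv_cancel₀ (sub_ne_zero.2 (Ne.symm hx1)), one_mul]
    rfl
  rwa [hkey] at hmem
end

section
variable (p n : ℕ) [Fact p.Prime] (hn : n ≠ 0)

lemma exists_pow_ne (hn2 : 2 ≤ n) : ∃ u : GaloisField p n, u ^ p ≠ u := by
  classical
  by_contra hall
  push_neg at hall
  have hp1 : 1 < p := (Fact.out : p.Prime).one_lt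
  have hne := FiniteField.X_pow_card_sub_X_ne_zero (GaloisField p n) hp1
  have hsub : (Finset.univ : Finset (GaloisField p n)) ⊆
      (Polynomial.X ^ p - Polynomial.X : Polynomial (GaloisField p n)).roots.toFinset := by
    intro u _
    rw [Multiset.mem_toFinset, Polynomial.mem_roots hne]
    simp [Polynomial.IsRoot, sub_eq_zero, hall u]
  have h1 := (Finset.card_le_card hsub).trans (Multiset.toFinset_card_le _)
  have h2 := (Polynomial.card_roots'
    (Polynomial.X ^ p - Polynomial.X : Polynomial (GaloisField p n)))
  rw [FiniteField.X_pow_card_sub_X_natDegree_eq _ hp1] at h2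
  rw [Finset.card_univ, card_gf p n (by omega)] at h1
  have hlt : p < p ^ n := by
    calc p = p ^ 1 := (pow_one p).symm
    _ < p ^ n := Nat.pow_lt_pow_right hp1 (by omega)
  omega

lemma fusion_control (A B : Subgroup (Gsd p n hn)) (hA : A ≤ Ssub p n hn)
    (hAc : IsCyclic A) (hAcard : Nat.card A = p ∨ Nat.card A = 4) :
    conjHomsIn (Hsub p n hn) A B = conjHomsIn ⊤ A B := by
  apply Set.Subset.antisymm
  · rintro φ ⟨g, -, hgspec⟩
    exact ⟨g, Subgroup.mem_top g, hgspec⟩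
  rintro φ ⟨g, -, hg⟩
  obtain ⟨gen, hgen⟩ := hAc.exists_generator
  obtain ⟨α', hα'⟩ := hA gen.2
  have hαgen : inl (Multiplicative.ofAdd α'.toAdd) = (gen : Gsd p n hn) := hα'
  set α : GaloisField p n := α'.toAdd with hαdef
  have hcard1 : Nat.card A ≠ 1 := by
    rcases hAcard with h | h <;> rw [h]
    · exact (Fact.out : p.Prime).one_lt.ne'
    · omega
  have hα0 : α ≠ 0 := by
    intro h0
    apply hcard1
    have hgen1 : (gen : Gsd p n hn) = 1 := by
      rw [← hαgen, h0]
      simp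
    have : ∀ x : A, x = 1 := by
      intro x
      obtain ⟨j, hj⟩ := Subgroup.mem_zpowers_iff.1 (hgen x)
      have : ((gen ^ j : A) : Gsd p n hn) = 1 := by
        push_cast
        rw [hgen1, one_zpow]
      rw [← hj]
      exact Subtype.ext this
    haveI : Subsingleton A := ⟨fun a b => (this a).trans (this b).symm⟩
    exact Nat.card_eq_one_iff_unique.2 ⟨inferInstance, ⟨1⟩⟩
  set c : (GaloisField p n)ˣ := g.right.left with hc
  set i : Multiplicative (ZMod n) := g.right.right with hi
  set β : GaloisField p n := chi p n hn i α with hβ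
  have hβ0 : β ≠ 0 := by
    intro h0
    exact hα0 ((chi p n hn i).injective (a₁ := α) (a₂ := 0)
      (by rw [map_zero, ← hβ]; exact h0))
  have hcval : (c : GaloisField p n) * β * α⁻¹ ≠ 0 :=
    mul_ne_zero (mul_ne_zero c.ne_zero hβ0) (inv_ne_zero hα0)
  refine ⟨inr (inl (Units.mk0 _ hcval)), ⟨Units.mk0 _ hcval, (rightHom_inr _).symm⟩, ?_⟩
  intro x
  rw [hg x]
  obtain ⟨j, hj⟩ := Subgroup.mem_zpowers_iff.1 (hgen x)
  have hx : (x : Gsd p n hn) = inl (Multiplicative.ofAdd (j • α)) := by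
    rw [← hj]
    push_cast
    rw [← hαgen, ← map_zpow]
    congr 1
  rw [hx, conj_inl, conj_inl]
  congr 1
  have hr : (inr (inl (Units.mk0 ((c : GaloisField p n) * β * α⁻¹) hcval)) : Gsd p n hn).right
      = inl (Units.mk0 _ hcval) := rfl
  rw [hr, phiG_inl_apply]
  rw [phiG_apply]
  have hmz : chi p n hn g.right.right (j • α) = j • β := by
    rw [hβ, map_zsmul]
  rw [← hi, hmz]
  have h1 : (c : GaloisField p n) * (j • β) = j • ((c : GaloisField p n) * β) :=
    mul_smul_comm j _ β
  have h2 : ((Units.mk0 ((c : GaloisField p n) * β * α⁻¹) hcval : (GaloisField p n)ˣ) :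
      GaloisField p n) * (j • α) = j • ((c : GaloisField p n) * β * α⁻¹ * α) :=
    mul_smul_comm j _ α
  rw [h1, h2, mul_assoc ((c : GaloisField p n) * β), inv_mul_cancel₀ hα0, mul_one]

lemma not_control (hn2 : 2 ≤ n) :
    conjHomsIn (Hsub p n hn) (Ssub p n hn) (Ssub p n hn)
      ≠ conjHomsIn ⊤ (Ssub p n hn) (Ssub p n hn) := by
  haveI : (Ssub p n hn).Normal := Ssub_normal p n hn
  set w : Gsd p n hn := inr (inr (Multiplicative.ofAdd (1 : ZMod n))) with hw
  set φW : (Ssub p n hn) →* (Ssub p n hn) := (MulAut.conjNormal w).toMonoidHom with hφW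
  intro heq
  have hmem : φW ∈ conjHomsIn ⊤ (Ssub p n hn) (Ssub p n hn) :=
    ⟨w, Subgroup.mem_top w, fun a => MulAut.conjNormal_apply w a⟩
  rw [← heq] at hmem
  obtain ⟨h, hH, hh⟩ := hmem
  obtain ⟨c, hc⟩ := hH
  have key : ∀ u : GaloisField p n, u ^ p = (c : GaloisField p n) * u := by
    intro u
    have hu := hh ⟨inl (Multiplicative.ofAdd u), ⟨Multiplicative.ofAdd u, rfl⟩⟩
    have hL : (φW ⟨inl (Multiplicative.ofAdd u), ⟨Multiplicative.ofAdd u, rfl⟩⟩ : Gsd p n hn)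
        = w * inl (Multiplicative.ofAdd u) * w⁻¹ :=
      MulAut.conjNormal_apply w _
    rw [hL, conj_inl] at hu
    have hR : h * inl (Multiplicative.ofAdd u) * h⁻¹
        = inl (phiG p n hn h.right (Multiplicative.ofAdd u)) := conj_inl p n hn h _
    rw [hR] at hu
    have hhr : h.right = inl c := hc.symm ▸ rfl
    have hwr : (w.right : Msd p n hn) = inr (Multiplicative.ofAdd (1 : ZMod n)) := rfl
    rw [hwr, hhr, phiG_inr_apply, phiG_inl_apply] at hu
    have := inl_injective (φ := phiG p n hn) hu
    have heq2 : chi p n hn (Multiplicative.ofAdd (1 : ZMod n)) u = (c : GaloisField p n) * u :=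
      Multiplicative.ofAdd.injective this
    rw [← heq2]
    haveI : Fact (1 < n) := ⟨by omega⟩
    rw [chi, zmodHom_apply, ZMod.val_one, pow_one, Frob_apply]
  obtain ⟨u, hu⟩ := exists_pow_ne p n hn2
  have hc1 : (c : GaloisField p n) = 1 := by
    have := key 1
    rwa [one_pow, mul_one, eq_comm] at this
  exact hu (by rw [key u, hc1, one_mul])

end

theorem exists_fusion_counterexample_on_small_cyclic_subgroups
    (p n : ℕ) (hp : p.Prime) (hn : 2 ≤ n) (hpn : ¬ p ∣ n) :
    ∃ (G : Type) (instG : Group G) (instF : Finite G),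
      @IsFusionCounterexample p G instG instF := by
  haveI : Fact p.Prime := ⟨hp⟩
  have hn0 : n ≠ 0 := by omega
  haveI : NeZero n := ⟨hn0⟩
  refine ⟨Gsd p n hn0, inferInstance, inferInstance,
    Ssub p n hn0, Hsub p n hn0, ?_, ?_, ?_, ?_, ?_, ?_, ?_, ?_⟩
  · exact IsPGroup.of_card (card_Ssub p n hn0)
  · rw [index_Ssub]
    intro hdvd
    rcases (Nat.Prime.dvd_mul hp).1 hdvd with h | h
    · exact not_p_dvd_sub_one p n hn0 h
    · exact hpn h
  · exact Ssub_normal p n hn0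
  · exact Ssub_le_Hsub p n hn0
  · rw [index_Hsub]
    exact Nat.Coprime.symm (hp.coprime_iff_not_dvd.2 hpn)
  · exact Ssub_le_pResidual p n hn0 hn
  · intro A B hA hB hAc hAcard hBc hBcard
    exact fusion_control p n hn0 A B hA hAc hAcard
  · exact not_control p n hn0 hn
end
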